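/- Every relatively residuated lattice (L,∨,∧,⊙,→,1) is congruence permutable: for any two congruences Θ and Φ on L, the relational compositions satisfy Θ∘Φ = Φ∘Θ. -/

import Mathlib

/-!
The term `p x y z = ((x → y) → z) ∧ ((z → y) → x) ∧ (x ∨ z)` is a Maltsev term:
relative adjointness gives `y ≤ x → y`, `x → x = 1`, `1 → y = y` and `x ≤ (x → y) → y`,
from which `p x y y = x` and `p x x y = y`. A congruence is compatible with every term, and
an algebra with a Maltsev term is congruence permutable: if `a Θ b Φ c`, then
`a = p a c c Φ p a b c Θ p b b c = c`.
-/

open Relator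

/-- A congruence on a relatively residuated lattice: an equivalence relation
compatible with ∨, ∧, ⊙ and →. -/
def IsRRLCongruence {L : Type*} [Lattice L] (mul imp : L → L → L)
    (Θ : L → L → Prop) : Prop :=
  Equivalence Θ ∧
    ∀ a b c d : L, Θ a b → Θ c d →
      Θ (a ⊔ c) (b ⊔ d) ∧ Θ (a ⊓ c) (b ⊓ d) ∧ Θ (mul a c) (mul b d) ∧ Θ (imp a c) (imp b d)

theorem exists_comp_swap_of_maltsev {α : Type*} (p : α → α → α → α)
    (hleft : ∀ x y, p x y y = x) (hright : ∀ x y, p x x y = y)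
    {Θ Φ : α → α → Prop} (hΘ : Equivalence Θ) (hΦ : Equivalence Φ)
    (hΘp : (Θ ⇒ Θ ⇒ Θ ⇒ Θ) p p) (hΦp : (Φ ⇒ Φ ⇒ Φ ⇒ Φ) p p)
    {a b c : α} (hab : Θ a b) (hbc : Φ b c) : ∃ m, Φ a m ∧ Θ m c := by
  refine ⟨p a b c, ?_, ?_⟩
  · have h := hΦp (hΦ.refl a) hbc (hΦ.refl c)
    rw [hleft] at h
    exact hΦ.symm h
  · simpa only [hright] using hΘp hab (hΘ.refl b) (hΘ.refl c)

namespace IsRRLCongruence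

variable {L : Type*} [Lattice L] {mul imp : L → L → L} {Θ : L → L → Prop}

theorem liftFun_sup (hΘ : IsRRLCongruence mul imp Θ) : (Θ ⇒ Θ ⇒ Θ) (· ⊔ ·) (· ⊔ ·) :=
  fun _ _ hx _ _ hy => (hΘ.2 _ _ _ _ hx hy).1

theorem liftFun_inf (hΘ : IsRRLCongruence mul imp Θ) : (Θ ⇒ Θ ⇒ Θ) (· ⊓ ·) (· ⊓ ·) :=
  fun _ _ hx _ _ hy => (hΘ.2 _ _ _ _ hx hy).2.1

theorem liftFun_imp (hΘ : IsRRLCongruence mul imp Θ) : (Θ ⇒ Θ ⇒ Θ) imp imp :=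
  fun _ _ hx _ _ hy => (hΘ.2 _ _ _ _ hx hy).2.2.2

end IsRRLCongruence

namespace RelativelyResiduated

variable {L : Type*} [Lattice L] [OrderTop L] {mul imp : L → L → L}

theorem le_imp (hcomm : ∀ x y, mul x y = mul y x) (hone : ∀ x, mul x ⊤ = x)
    (hmono : ∀ a b c, a ≤ b → mul a c ≤ mul b c)
    (hadj : ∀ a b c, mul (a ⊔ b) (c ⊔ b) ≤ b ↔ c ⊔ b ≤ imp a b) (x y : L) :
    y ≤ imp x y := by
  have h : mul (x ⊔ y) (y ⊔ y) ≤ y :=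
    calc mul (x ⊔ y) (y ⊔ y) ≤ mul ⊤ (y ⊔ y) := hmono _ _ _ le_top
      _ = y := by rw [hcomm, hone, sup_idem]
  simpa using (hadj x y y).mp h

theorem imp_self (hone : ∀ x, mul x ⊤ = x)
    (hadj : ∀ a b c, mul (a ⊔ b) (c ⊔ b) ≤ b ↔ c ⊔ b ≤ imp a b) (x : L) :
    imp x x = ⊤ := by
  have h := (hadj x x ⊤).mp (by rw [sup_idem, top_sup_eq, hone])
  rwa [top_sup_eq, top_le_iff] at h

theorem top_imp (hcomm : ∀ x y, mul x y = mul y x) (hone : ∀ x, mul x ⊤ = x)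
    (hmono : ∀ a b c, a ≤ b → mul a c ≤ mul b c)
    (hadj : ∀ a b c, mul (a ⊔ b) (c ⊔ b) ≤ b ↔ c ⊔ b ≤ imp a b) (y : L) :
    imp ⊤ y = y := by
  have hy := le_imp hcomm hone hmono hadj ⊤ y
  have h := (hadj ⊤ y (imp ⊤ y)).mpr (sup_le le_rfl hy)
  rw [top_sup_eq, sup_eq_left.mpr hy, hcomm, hone] at h
  exact le_antisymm h hy

theorem le_imp_imp (hcomm : ∀ x y, mul x y = mul y x) (hone : ∀ x, mul x ⊤ = x)
    (hmono : ∀ a b c, a ≤ b → mul a c ≤ mul b c)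
    (hadj : ∀ a b c, mul (a ⊔ b) (c ⊔ b) ≤ b ↔ c ⊔ b ≤ imp a b) (x y : L) :
    x ≤ imp (imp x y) y := by
  have h := (hadj x y (imp x y)).mpr (sup_le le_rfl (le_imp hcomm hone hmono hadj x y))
  rw [hcomm] at h
  exact le_sup_left.trans ((hadj (imp x y) y x).mp h)

end RelativelyResiduated

def maltsevTerm {L : Type*} [Lattice L] (imp : L → L → L) (x y z : L) : L :=
  imp (imp x y) z ⊓ imp (imp z y) x ⊓ (x ⊔ z)

namespace maltsevTerm

open RelativelyResiduated

variable {L : Type*} [Lattice L] [OrderTop L] {mul imp : L → L → L}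

theorem eq_left (hcomm : ∀ x y, mul x y = mul y x) (hone : ∀ x, mul x ⊤ = x)
    (hmono : ∀ a b c, a ≤ b → mul a c ≤ mul b c)
    (hadj : ∀ a b c, mul (a ⊔ b) (c ⊔ b) ≤ b ↔ c ⊔ b ≤ imp a b) (x y : L) :
    maltsevTerm imp x y y = x := by
  rw [maltsevTerm, imp_self hone hadj, top_imp hcomm hone hmono hadj]
  exact le_antisymm (inf_le_left.trans inf_le_right)
    (le_inf (le_inf (le_imp_imp hcomm hone hmono hadj x y) le_rfl) le_sup_left)

theorem eq_right (hcomm : ∀ x y, mul x y = mul y x) (hone : ∀ x, mul x ⊤ = x)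
    (hmono : ∀ a b c, a ≤ b → mul a c ≤ mul b c)
    (hadj : ∀ a b c, mul (a ⊔ b) (c ⊔ b) ≤ b ↔ c ⊔ b ≤ imp a b) (x y : L) :
    maltsevTerm imp x x y = y := by
  rw [maltsevTerm, imp_self hone hadj, top_imp hcomm hone hmono hadj]
  exact le_antisymm (inf_le_left.trans inf_le_left)
    (le_inf (le_inf le_rfl (le_imp_imp hcomm hone hmono hadj y x)) le_sup_right)

end maltsevTerm

theorem IsRRLCongruence.liftFun_maltsevTerm {L : Type*} [Lattice L] {mul imp : L → L → L}
    {Θ : L → L → Prop} (hΘ : IsRRLCongruence mul imp Θ) :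
    (Θ ⇒ Θ ⇒ Θ ⇒ Θ) (maltsevTerm imp) (maltsevTerm imp) :=
  fun _ _ hx _ _ hy _ _ hz =>
    hΘ.liftFun_inf
      (hΘ.liftFun_inf (hΘ.liftFun_imp (hΘ.liftFun_imp hx hy) hz)
        (hΘ.liftFun_imp (hΘ.liftFun_imp hz hy) hx))
      (hΘ.liftFun_sup hx hz)

/-- Every relatively residuated lattice is congruence permutable. -/
theorem stmt_11 {L : Type*} [Lattice L] [OrderTop L] (mul imp : L → L → L)
    (hcomm : ∀ x y : L, mul x y = mul y x)
    (hone : ∀ x : L, mul x ⊤ = x)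
    (hmono : ∀ a b c : L, a ≤ b → mul a c ≤ mul b c)
    (hadj : ∀ a b c : L, mul (a ⊔ b) (c ⊔ b) ≤ b ↔ c ⊔ b ≤ imp a b)
    (Θ Φ : L → L → Prop)
    (hΘ : IsRRLCongruence mul imp Θ) (hΦ : IsRRLCongruence mul imp Φ) :
    ∀ a c : L, (∃ b : L, Θ a b ∧ Φ b c) ↔ (∃ b : L, Φ a b ∧ Θ b c) := by
  have hleft := maltsevTerm.eq_left hcomm hone hmono hadj
  have hright := maltsevTerm.eq_right hcomm hone hmono hadj
  intro a c
  constructor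
  · rintro ⟨b, hab, hbc⟩
    exact exists_comp_swap_of_maltsev _ hleft hright hΘ.1 hΦ.1
      hΘ.liftFun_maltsevTerm hΦ.liftFun_maltsevTerm hab hbc
  · rintro ⟨b, hab, hbc⟩
    exact exists_comp_swap_of_maltsev _ hleft hright hΦ.1 hΘ.1
      hΦ.liftFun_maltsevTerm hΘ.liftFun_maltsevTerm hab hbc
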